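/- There exists ε₀ > 0 such that for every L ≥ 0 there is a constant C' ≥ 0 (depending only on h, L and ε₀) such that for every ε with |ε| ≤ ε₀ and all φ₁, φ₂ ∈ B_L, one has sup_{x∈ℝ} |T_ε φ₁(x) − T_ε φ₂(x)| ≤ C' · sup_{x∈ℝ} |φ₁(x) − φ₂(x)|; in particular, T_ε is continuous on B_L in the C⁰ (uniform) topology. -/

import Mathlib

open MeasureTheory

/-- The coupled map `g_{ε,φ}(x) = x + ε ∫₀¹ h(x,y) φ(y) dy`. -/
noncomputable def gmap (h : ℝ → ℝ → ℝ) (ε : ℝ) (φ : ℝ → ℝ) : ℝ → ℝ :=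
  fun x => x + ε * ∫ y in (0:ℝ)..1, h x y * φ y

/-- The transfer operator of `g_{ε,φ}` applied to `u`: `(u / g') ∘ g⁻¹`. -/
noncomputable def Lop (h : ℝ → ℝ → ℝ) (ε : ℝ) (φ u : ℝ → ℝ) : ℝ → ℝ :=
  fun x => u (Function.invFun (gmap h ε φ) x) /
    deriv (gmap h ε φ) (Function.invFun (gmap h ε φ) x)

/-- The transfer operator of the doubling map. -/
noncomputable def Pop (ψ : ℝ → ℝ) : ℝ → ℝ :=
  fun x => (1/2) * ψ (x/2) + (1/2) * ψ ((x+1)/2)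

/-- The self-consistent transfer operator `T_ε φ = P (L_{ε,φ} φ)`. -/
noncomputable def Tsc (h : ℝ → ℝ → ℝ) (ε : ℝ) (φ : ℝ → ℝ) : ℝ → ℝ :=
  Pop (Lop h ε φ φ)

/-- `h` is 1-periodic in each variable. -/
def periodicH (h : ℝ → ℝ → ℝ) : Prop :=
  (∀ x y, h (x+1) y = h x y) ∧ (∀ x y, h x (y+1) = h x y)

/-- `B_L`: 1-periodic, nonnegative, `L`-Lipschitz densities with `∫₀¹ φ = 1`. -/
def memB (L : ℝ) (φ : ℝ → ℝ) : Prop :=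
  (∀ x, φ (x+1) = φ x) ∧ (∀ x, 0 ≤ φ x) ∧
  (∀ x y, |φ x - φ y| ≤ L * |x - y|) ∧ (∫ x in (0:ℝ)..1, φ x) = 1

/-!
Periodicity and compactness bound `h`, `∂ₓh` and `∂ₓ²h`, hence for `|ε|` small every
`g = g_{ε,φ}` with `φ ∈ B_L` is a diffeomorphism with `1/2 ≤ g' ≤ 3/2`. Let `a_i = g_i⁻¹(z)` for
`g_i = g_{ε,φ_i}` and `δ = sup |φ₁ - φ₂|`. Since `g₁` expands distances by at least `1/2` and
`|g₁ - g₂| ≤ |ε| ‖h‖_∞ δ`, we get `|a₁ - a₂| = O(δ)`; then `|φ₁(a₁) - φ₂(a₂)|` and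
`|g₁'(a₁) - g₂'(a₂)|` are `O(δ)` (the latter by the Lipschitz bound on `∂ₓh`), hence so is
`|L_{ε,φ₁}φ₁(z) - L_{ε,φ₂}φ₂(z)|`. Finally `P` is a contraction for the sup norm.
-/

open Function

theorem Function.Periodic.fderiv {𝕜 E F : Type*} [NontriviallyNormedField 𝕜]
    [NormedAddCommGroup E] [NormedSpace 𝕜 E] [NormedAddCommGroup F] [NormedSpace 𝕜 F]
    {f : E → F} {c : E} (hf : Periodic f c) : Periodic (fderiv 𝕜 f) c := fun x => by
  rw [← fderiv_comp_add_right, show (fun y => f (y + c)) = f from funext hf]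

theorem Continuous.exists_forall_norm_le_of_periodic_prod {E : Type*} [SeminormedAddCommGroup E]
    {f : ℝ × ℝ → E} (hf : Continuous f) (h₁ : Periodic f (1, 0)) (h₂ : Periodic f (0, 1)) :
    ∃ M, ∀ p, ‖f p‖ ≤ M := by
  obtain ⟨M, hM⟩ := (isCompact_Icc (a := ((0:ℝ), (0:ℝ))) (b := (1, 1))).exists_bound_of_continuousOn
    hf.continuousOn
  refine ⟨M, fun p => ?_⟩
  have hfract : f (Int.fract p.1, Int.fract p.2) = f p := by
    have : (Int.fract p.1, Int.fract p.2) = p - ⌊p.1⌋ • ((1:ℝ), (0:ℝ)) - ⌊p.2⌋ • ((0:ℝ), (1:ℝ)) :=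
      by ext <;> simp
    rw [this, h₂.sub_zsmul_eq, h₁.sub_zsmul_eq]
  rw [← hfract]
  exact hM _ ⟨⟨Int.fract_nonneg _, Int.fract_nonneg _⟩,
    ⟨(Int.fract_lt_one _).le, (Int.fract_lt_one _).le⟩⟩

theorem mul_abs_sub_le_abs_sub_of_le_deriv {f : ℝ → ℝ} (hf : Differentiable ℝ f) {C : ℝ}
    (hC : ∀ x, C ≤ deriv f x) (x y : ℝ) : C * |y - x| ≤ |f y - f x| := by
  rcases le_total x y with hxy | hyx
  · rw [abs_of_nonneg (sub_nonneg.2 hxy)]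
    exact (mul_sub_le_image_sub_of_le_deriv hf hC hxy).trans (le_abs_self _)
  · rw [abs_sub_comm, abs_of_nonneg (sub_nonneg.2 hyx), abs_sub_comm]
    exact (mul_sub_le_image_sub_of_le_deriv hf hC hyx).trans (le_abs_self _)

theorem Continuous.surjective_of_abs_sub_le {f : ℝ → ℝ} (hf : Continuous f) {C : ℝ}
    (hC : ∀ x, |f x - x| ≤ C) : Surjective f := by
  refine hf.surjective ?_ ?_
  · refine Filter.tendsto_atTop_mono (fun x => ?_)
      (Filter.tendsto_atTop_add_const_right _ (-C) Filter.tendsto_id)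
    linarith [(abs_le.1 (hC x)).1, show id x = x from rfl]
  · refine Filter.tendsto_atBot_mono (fun x => ?_)
      (Filter.tendsto_atBot_add_const_right _ C Filter.tendsto_id)
    linarith [(abs_le.1 (hC x)).2, show id x = x from rfl]

theorem abs_div_sub_div_le {p₁ p₂ D₁ D₂ K : ℝ} (hD₁ : 1/2 ≤ D₁) (hD₂ : 1/2 ≤ D₂) (hD₂' : D₂ ≤ 3/2)
    (hp₂ : |p₂| ≤ K) : |p₁ / D₁ - p₂ / D₂| ≤ 6 * |p₁ - p₂| + 4 * K * |D₁ - D₂| := by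
  have hD : 0 < D₁ * D₂ := mul_pos (by linarith) (by linarith)
  rw [div_sub_div _ _ (by linarith) (by linarith), abs_div, abs_of_pos hD, div_le_iff₀ hD]
  calc |p₁ * D₂ - D₁ * p₂| = |(p₁ - p₂) * D₂ + p₂ * (D₂ - D₁)| := by ring_nf
    _ ≤ |p₁ - p₂| * (3/2) + K * |D₁ - D₂| := by
      refine (abs_add_le _ _).trans ?_
      rw [abs_mul, abs_mul, abs_of_pos (by linarith : 0 < D₂), abs_sub_comm D₂]
      gcongr
    _ ≤ (6 * |p₁ - p₂| + 4 * K * |D₁ - D₂|) * (D₁ * D₂) := by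
      have hD' : 1/4 ≤ D₁ * D₂ := by nlinarith
      have hK : 0 ≤ K := (abs_nonneg _).trans hp₂
      have hrhs : 0 ≤ 6 * |p₁ - p₂| + 4 * K * |D₁ - D₂| := by positivity
      nlinarith [abs_nonneg (p₁ - p₂)]

theorem abs_Pop_sub_le {ψ₁ ψ₂ : ℝ → ℝ} {C : ℝ} (hψ : ∀ x, |ψ₁ x - ψ₂ x| ≤ C) (x : ℝ) :
    |Pop ψ₁ x - Pop ψ₂ x| ≤ C := by
  have h₁ := abs_le.1 (hψ (x / 2))
  have h₂ := abs_le.1 (hψ ((x + 1) / 2))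
  simp only [Pop]
  exact abs_le.2 ⟨by linarith, by linarith⟩

theorem abs_integral_mul_sub_integral_mul_le {k φ₁ φ₂ : ℝ → ℝ} {M δ : ℝ} (hk : Continuous k)
    (hφ₁ : Continuous φ₁) (hφ₂ : Continuous φ₂) (hkM : ∀ y, |k y| ≤ M)
    (hδ : ∀ y, |φ₁ y - φ₂ y| ≤ δ) :
    |(∫ y in (0:ℝ)..1, k y * φ₁ y) - ∫ y in (0:ℝ)..1, k y * φ₂ y| ≤ M * δ := by
  rw [← intervalIntegral.integral_sub (f := fun y => k y * φ₁ y) (g := fun y => k y * φ₂ y)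
    ((hk.mul hφ₁).intervalIntegrable _ _) ((hk.mul hφ₂).intervalIntegrable _ _)]
  simpa using intervalIntegral.norm_integral_le_of_norm_le_const (a := 0) (b := 1)
    (f := fun y => k y * φ₁ y - k y * φ₂ y) (C := M * δ) fun y _ => by
      rw [Real.norm_eq_abs, ← mul_sub, abs_mul]
      exact mul_le_mul (hkM y) (hδ y) (abs_nonneg _) ((abs_nonneg _).trans (hkM y))

namespace memB

variable {L : ℝ} {φ : ℝ → ℝ}

theorem continuous (hφ : memB L φ) : Continuous φ :=
  (LipschitzWith.of_dist_le_mul (K := L.toNNReal) fun x y => by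
    rw [Real.dist_eq, Real.dist_eq, Real.coe_toNNReal']
    exact (hφ.2.2.1 x y).trans
      (mul_le_mul_of_nonneg_right (le_max_left _ _) (abs_nonneg _))).continuous

theorem abs_le_one_add (hL : 0 ≤ L) (hφ : memB L φ) (t : ℝ) : |φ t| ≤ 1 + L := by
  have hlow : ∀ x ∈ Set.Icc t (t + 1), φ t - L ≤ φ x := fun x hx => by
    have hdist : |t - x| ≤ 1 := by
      rw [abs_sub_comm, _root_.abs_le]; constructor <;> linarith [hx.1, hx.2]
    linarith [(_root_.abs_le.1 (hφ.2.2.1 t x)).2, mul_le_of_le_one_right hL hdist]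
  have hdiff : ∫ _ in t..t + 1, φ t - L ≤ ∫ x in t..t + 1, φ x :=
    intervalIntegral.integral_mono_on (by linarith) intervalIntegrable_const
      (hφ.continuous.intervalIntegrable _ _) hlow
  rw [(show Periodic φ 1 from hφ.1).intervalIntegral_add_eq t 0, zero_add, hφ.2.2.2] at hdiff
  rw [intervalIntegral.integral_const, add_sub_cancel_left, one_smul] at hdiff
  rw [abs_of_nonneg (hφ.2.1 t)]
  linarith

theorem bddAbove_range_abs_sub (hL : 0 ≤ L) {ψ : ℝ → ℝ} (hφ : memB L φ) (hψ : memB L ψ) :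
    BddAbove (Set.range fun x => |φ x - ψ x|) :=
  ⟨2 * (1 + L), by
    rintro _ ⟨x, rfl⟩
    linarith [hφ.abs_le_one_add hL x, hψ.abs_le_one_add hL x, abs_sub (φ x) (ψ x)]⟩

theorem abs_integral_mul_le (hφ : memB L φ) {f : ℝ → ℝ} {M : ℝ} (hf : ∀ y, |f y| ≤ M) :
    |∫ y in (0:ℝ)..1, f y * φ y| ≤ M := by
  have := intervalIntegral.norm_integral_le_of_norm_le zero_le_one
    (μ := volume) (f := fun y => f y * φ y) (g := fun y => M * φ y)
    (ae_of_all _ fun y _ => by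
      rw [Real.norm_eq_abs, abs_mul, abs_of_nonneg (hφ.2.1 y)]
      exact mul_le_mul_of_nonneg_right (hf y) (hφ.2.1 y))
    ((continuous_const.mul hφ.continuous).intervalIntegrable _ _)
  rwa [intervalIntegral.integral_const_mul, hφ.2.2.2, mul_one] at this

end memB

/-- `h'` plays the role of `∂ₓh`. -/
structure KernelBounds (h h' : ℝ → ℝ → ℝ) (M₀ M₁ M₂ : ℝ) : Prop where
  continuous : Continuous (uncurry h)
  continuous_deriv : Continuous (uncurry h')
  hasDerivAt : ∀ x y, HasDerivAt (fun t => h t y) (h' x y) x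
  abs_le : ∀ x y, |h x y| ≤ M₀
  abs_deriv_le : ∀ x y, |h' x y| ≤ M₁
  abs_deriv_sub_le : ∀ x u y, |h' x y - h' u y| ≤ M₂ * |x - u|

theorem exists_kernelBounds {h : ℝ → ℝ → ℝ} (hC2 : ContDiff ℝ 2 (uncurry h))
    (hper : periodicH h) : ∃ h' M₀ M₁ M₂, KernelBounds h h' M₀ M₁ M₂ := by
  set F := fderiv ℝ (uncurry h)
  have hF : ContDiff ℝ 1 F := hC2.fderiv_right (by norm_num)
  have hper₁ : Periodic (uncurry h) (1, 0) := fun p => by simpa [uncurry] using hper.1 p.1 p.2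
  have hper₂ : Periodic (uncurry h) (0, 1) := fun p => by simpa [uncurry] using hper.2 p.1 p.2
  obtain ⟨M₀, hM₀⟩ := hC2.continuous.exists_forall_norm_le_of_periodic_prod hper₁ hper₂
  obtain ⟨M₁, hM₁⟩ :=
    hF.continuous.exists_forall_norm_le_of_periodic_prod hper₁.fderiv hper₂.fderiv
  obtain ⟨M₂, hM₂⟩ := (hF.continuous_fderiv one_ne_zero).exists_forall_norm_le_of_periodic_prod
    hper₁.fderiv.fderiv hper₂.fderiv.fderiv
  have hF_lip : ∀ p q, ‖F p - F q‖ ≤ M₂ * ‖p - q‖ := fun p q =>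
    convex_univ.norm_image_sub_le_of_norm_fderiv_le (fun x _ => hF.differentiable one_ne_zero x)
      (fun x _ => hM₂ x) trivial trivial
  have hunit : ‖((1:ℝ), (0:ℝ))‖ = 1 := by simp
  refine ⟨fun x y => F (x, y) (1, 0), M₀, M₁, M₂, hC2.continuous,
    hF.continuous.clm_apply continuous_const, fun x y => ?_, fun x y => hM₀ (x, y),
    fun x y => ?_, fun x u y => ?_⟩
  · exact (hC2.differentiable (by norm_num) (x, y)).hasFDerivAt.comp_hasDerivAt x
      ((hasDerivAt_id x).prodMk (hasDerivAt_const x y))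
  · simpa [hunit] using (F (x, y)).le_of_opNorm_le (hM₁ (x, y)) (1, 0)
  · calc |F (x, y) (1, 0) - F (u, y) (1, 0)| = ‖(F (x, y) - F (u, y)) (1, 0)‖ := by simp
      _ ≤ ‖F (x, y) - F (u, y)‖ * ‖((1:ℝ), (0:ℝ))‖ := ContinuousLinearMap.le_opNorm _ _
      _ ≤ M₂ * |x - u| := by simpa [hunit] using hF_lip (x, y) (u, y)

namespace KernelBounds

variable {h h' : ℝ → ℝ → ℝ} {M₀ M₁ M₂ L ε : ℝ} {φ φ₁ φ₂ : ℝ → ℝ}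

theorem bound_nonneg (hb : KernelBounds h h' M₀ M₁ M₂) : 0 ≤ M₀ :=
  (abs_nonneg _).trans (hb.abs_le 0 0)

theorem derivBound_nonneg (hb : KernelBounds h h' M₀ M₁ M₂) : 0 ≤ M₁ :=
  (abs_nonneg _).trans (hb.abs_deriv_le 0 0)

theorem derivLip_nonneg (hb : KernelBounds h h' M₀ M₁ M₂) : 0 ≤ M₂ := by
  simpa using (abs_nonneg _).trans (hb.abs_deriv_sub_le 1 0 0)

theorem hasDerivAt_gmap (hb : KernelBounds h h' M₀ M₁ M₂) (ε : ℝ) (hφ : Continuous φ) (x : ℝ) :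
    HasDerivAt (gmap h ε φ) (1 + ε * ∫ y in (0:ℝ)..1, h' x y * φ y) x := by
  have hdiff := intervalIntegral.hasDerivAt_integral_of_dominated_loc_of_deriv_le
    (μ := volume) (a := 0) (b := 1) (x₀ := x) (F' := fun t y => h' t y * φ y)
    (bound := fun y => M₁ * |φ y|) Filter.univ_mem
    (Filter.Eventually.of_forall fun t =>
      ((hb.continuous.uncurry_left t).mul hφ).aestronglyMeasurable)
    (((hb.continuous.uncurry_left x).mul hφ).intervalIntegrable _ _)
    ((hb.continuous_deriv.uncurry_left x).mul hφ).aestronglyMeasurable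
    (ae_of_all _ fun y _ t _ => by
      rw [Real.norm_eq_abs, abs_mul]
      exact mul_le_mul_of_nonneg_right (hb.abs_deriv_le t y) (abs_nonneg _))
    ((continuous_const.mul hφ.abs).intervalIntegrable _ _)
    (ae_of_all _ fun y _ t _ => (hb.hasDerivAt t y).mul_const (φ y))
  exact (hasDerivAt_id x).add (hdiff.2.const_mul ε)

theorem differentiable_gmap (hb : KernelBounds h h' M₀ M₁ M₂) (ε : ℝ) (hφ : Continuous φ) :
    Differentiable ℝ (gmap h ε φ) :=
  fun x => (hb.hasDerivAt_gmap ε hφ x).differentiableAt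

theorem abs_deriv_gmap_sub_one_le (hb : KernelBounds h h' M₀ M₁ M₂) (hφ : memB L φ) (x : ℝ) :
    |deriv (gmap h ε φ) x - 1| ≤ |ε| * M₁ := by
  rw [(hb.hasDerivAt_gmap ε hφ.continuous x).deriv, add_sub_cancel_left, abs_mul]
  exact mul_le_mul_of_nonneg_left (hφ.abs_integral_mul_le (hb.abs_deriv_le x)) (abs_nonneg _)

theorem surjective_gmap (hb : KernelBounds h h' M₀ M₁ M₂) (hφ : memB L φ) :
    Surjective (gmap h ε φ) :=
  (hb.differentiable_gmap ε hφ.continuous).continuous.surjective_of_abs_sub_le fun x => by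
    rw [gmap, add_sub_cancel_left, abs_mul]
    exact mul_le_mul_of_nonneg_left (hφ.abs_integral_mul_le (hb.abs_le x)) (abs_nonneg _)

theorem abs_gmap_sub_gmap_le (hb : KernelBounds h h' M₀ M₁ M₂) {δ : ℝ} (hφ₁ : Continuous φ₁)
    (hφ₂ : Continuous φ₂) (hδ : ∀ y, |φ₁ y - φ₂ y| ≤ δ) (x : ℝ) :
    |gmap h ε φ₁ x - gmap h ε φ₂ x| ≤ |ε| * (M₀ * δ) := by
  rw [gmap, gmap, add_sub_add_left_eq_sub, ← mul_sub, abs_mul]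
  exact mul_le_mul_of_nonneg_left (abs_integral_mul_sub_integral_mul_le
    (hb.continuous.uncurry_left x) hφ₁ hφ₂ (hb.abs_le x) hδ) (abs_nonneg _)

theorem abs_deriv_gmap_sub_le (hb : KernelBounds h h' M₀ M₁ M₂) {δ : ℝ} (hφ₁ : memB L φ₁)
    (hφ₂ : Continuous φ₂) (hδ : ∀ y, |φ₁ y - φ₂ y| ≤ δ) (a₁ a₂ : ℝ) :
    |deriv (gmap h ε φ₁) a₁ - deriv (gmap h ε φ₂) a₂| ≤ |ε| * (M₂ * |a₁ - a₂| + M₁ * δ) := by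
  have hshift : |(∫ y in (0:ℝ)..1, h' a₁ y * φ₁ y) - ∫ y in (0:ℝ)..1, h' a₂ y * φ₁ y|
      ≤ M₂ * |a₁ - a₂| := by
    rw [← intervalIntegral.integral_sub (f := fun y => h' a₁ y * φ₁ y)
      (g := fun y => h' a₂ y * φ₁ y)
      (((hb.continuous_deriv.uncurry_left a₁).mul hφ₁.continuous).intervalIntegrable _ _)
      (((hb.continuous_deriv.uncurry_left a₂).mul hφ₁.continuous).intervalIntegrable _ _)]
    simp_rw [← sub_mul]
    exact hφ₁.abs_integral_mul_le fun y => hb.abs_deriv_sub_le a₁ a₂ y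
  have hdens := abs_integral_mul_sub_integral_mul_le (hb.continuous_deriv.uncurry_left a₂)
    hφ₁.continuous hφ₂ (hb.abs_deriv_le a₂) hδ
  rw [(hb.hasDerivAt_gmap ε hφ₁.continuous a₁).deriv, (hb.hasDerivAt_gmap ε hφ₂ a₂).deriv,
    add_sub_add_left_eq_sub, ← mul_sub, abs_mul]
  refine mul_le_mul_of_nonneg_left ?_ (abs_nonneg _)
  calc _ ≤ _ := abs_sub_le _ (∫ y in (0:ℝ)..1, h' a₂ y * φ₁ y) _
    _ ≤ M₂ * |a₁ - a₂| + M₁ * δ := add_le_add hshift hdens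

theorem abs_invFun_gmap_sub_le (hb : KernelBounds h h' M₀ M₁ M₂) (hε : |ε| * M₁ ≤ 1/2) {δ : ℝ}
    (hφ₁ : memB L φ₁) (hφ₂ : memB L φ₂) (hδ : ∀ y, |φ₁ y - φ₂ y| ≤ δ) (z : ℝ) :
    |invFun (gmap h ε φ₁) z - invFun (gmap h ε φ₂) z| ≤ 2 * (|ε| * (M₀ * δ)) := by
  set a₁ := invFun (gmap h ε φ₁) z
  set a₂ := invFun (gmap h ε φ₂) z
  have hexpand := mul_abs_sub_le_abs_sub_of_le_deriv (C := 1/2)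
    (hb.differentiable_gmap ε hφ₁.continuous)
    (fun x => by linarith [(_root_.abs_le.1 (hb.abs_deriv_gmap_sub_one_le (ε := ε) hφ₁ x)).1])
    a₂ a₁
  have ha₁ : gmap h ε φ₁ a₁ = z := invFun_eq (hb.surjective_gmap hφ₁ z)
  have ha₂ : gmap h ε φ₂ a₂ = z := invFun_eq (hb.surjective_gmap hφ₂ z)
  have hclose := hb.abs_gmap_sub_gmap_le (ε := ε) hφ₁.continuous hφ₂.continuous hδ a₂
  rw [ha₁, ← ha₂, abs_sub_comm (gmap h ε φ₂ a₂)] at hexpand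
  linarith

theorem abs_Lop_sub_le (hb : KernelBounds h h' M₀ M₁ M₂) {ε₀ δ : ℝ} (hL : 0 ≤ L)
    (hε : |ε| ≤ ε₀) (hε₀ : ε₀ * M₁ ≤ 1/2) (hφ₁ : memB L φ₁) (hφ₂ : memB L φ₂)
    (hδ : ∀ y, |φ₁ y - φ₂ y| ≤ δ) (z : ℝ) :
    |Lop h ε φ₁ φ₁ z - Lop h ε φ₂ φ₂ z| ≤
      (6 * (1 + 2 * L * ε₀ * M₀) + 4 * (1 + L) * ε₀ * (M₁ + 2 * M₂ * ε₀ * M₀)) * δ := by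
  have hM₀ := hb.bound_nonneg
  have hM₁ := hb.derivBound_nonneg
  have hM₂ := hb.derivLip_nonneg
  have hε₀0 : 0 ≤ ε₀ := (abs_nonneg _).trans hε
  have hεM : |ε| * M₁ ≤ 1/2 := (mul_le_mul_of_nonneg_right hε hM₁).trans hε₀
  have hδ0 : 0 ≤ δ := (abs_nonneg _).trans (hδ 0)
  set a₁ := invFun (gmap h ε φ₁) z
  set a₂ := invFun (gmap h ε φ₂) z
  have ha : |a₁ - a₂| ≤ 2 * (ε₀ * (M₀ * δ)) :=
    (hb.abs_invFun_gmap_sub_le hεM hφ₁ hφ₂ hδ z).trans (by gcongr)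
  have hφa : |φ₁ a₁ - φ₂ a₂| ≤ δ + L * |a₁ - a₂| :=
    (abs_sub_le _ (φ₂ a₁) _).trans (add_le_add (hδ a₁) (hφ₂.2.2.1 a₁ a₂))
  have hD := hb.abs_deriv_gmap_sub_le (ε := ε) hφ₁ hφ₂.continuous hδ a₁ a₂
  have hD₁ := _root_.abs_le.1 (hb.abs_deriv_gmap_sub_one_le (ε := ε) hφ₁ a₁)
  have hD₂ := _root_.abs_le.1 (hb.abs_deriv_gmap_sub_one_le (ε := ε) hφ₂ a₂)
  calc |Lop h ε φ₁ φ₁ z - Lop h ε φ₂ φ₂ z|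
      = |φ₁ a₁ / deriv (gmap h ε φ₁) a₁ - φ₂ a₂ / deriv (gmap h ε φ₂) a₂| := rfl
    _ ≤ 6 * |φ₁ a₁ - φ₂ a₂| + 4 * (1 + L) * |deriv (gmap h ε φ₁) a₁ - deriv (gmap h ε φ₂) a₂| :=
      abs_div_sub_div_le (by linarith) (by linarith) (by linarith) (hφ₂.abs_le_one_add hL a₂)
    _ ≤ 6 * (δ + L * (2 * (ε₀ * (M₀ * δ))))
          + 4 * (1 + L) * (ε₀ * (M₂ * (2 * (ε₀ * (M₀ * δ))) + M₁ * δ)) := by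
      gcongr
      · exact hφa.trans (by gcongr)
      · exact hD.trans (by gcongr)
    _ = (6 * (1 + 2 * L * ε₀ * M₀) + 4 * (1 + L) * ε₀ * (M₁ + 2 * M₂ * ε₀ * M₀)) * δ := by ring

end KernelBounds

/-- `T_ε` is Lipschitz on `B_L` with respect to the `C⁰` (uniform) norm; in particular it is
continuous on `B_L` in the uniform topology. -/
theorem stmt4 (h : ℝ → ℝ → ℝ) (hC2 : ContDiff ℝ 2 (Function.uncurry h))
    (hper : periodicH h) :
    ∃ ε₀ > (0:ℝ), ∀ L : ℝ, 0 ≤ L → ∃ C' ≥ (0:ℝ), ∀ ε : ℝ, |ε| ≤ ε₀ →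
      ∀ φ₁ φ₂ : ℝ → ℝ, memB L φ₁ → memB L φ₂ →
        (⨆ x : ℝ, |Tsc h ε φ₁ x - Tsc h ε φ₂ x|) ≤ C' * ⨆ x : ℝ, |φ₁ x - φ₂ x| := by
  obtain ⟨h', M₀, M₁, M₂, hb⟩ := exists_kernelBounds hC2 hper
  have hM₀ := hb.bound_nonneg
  have hM₁ := hb.derivBound_nonneg
  have hM₂ := hb.derivLip_nonneg
  set ε₀ : ℝ := 1 / (2 * (M₁ + 1))
  have hε₀ : ε₀ * M₁ ≤ 1/2 := by
    rw [div_mul_eq_mul_div, one_mul, div_le_iff₀ (by positivity)]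
    linarith
  refine ⟨ε₀, by positivity, fun L hL =>
    ⟨6 * (1 + 2 * L * ε₀ * M₀) + 4 * (1 + L) * ε₀ * (M₁ + 2 * M₂ * ε₀ * M₀), by positivity,
      fun ε hε φ₁ φ₂ hφ₁ hφ₂ => ?_⟩⟩
  have hδ : ∀ y, |φ₁ y - φ₂ y| ≤ ⨆ x, |φ₁ x - φ₂ x| :=
    le_ciSup (hφ₁.bddAbove_range_abs_sub hL hφ₂)
  exact Real.iSup_le (abs_Pop_sub_le (hb.abs_Lop_sub_le hL hε hε₀ hφ₁ hφ₂ hδ))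
    (mul_nonneg (by positivity) (Real.iSup_nonneg fun _ => abs_nonneg _))
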